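/- For the ordered path P on vertex set {1,2,3,4} with edges {1,4},{2,3},{3,4}, the canonical (Erdős–Rado) Ramsey number satisfies ER(P) = 7. That is: every edge-coloring of the ordered complete graph K_7 contains a canonically colored copy of P, and there exists an edge-coloring of the ordered K_6 with no canonically colored copy of P. -/

import Mathlib

/-- Given an ordered graph on `Fin m` whose edge list `E` consists of pairs `(a, b)` with
`a < b`, an order-preserving injection `f : Fin m → Fin n`, and an edge-coloring `χ` of the
ordered complete graph on `Fin n`, the copy of the graph given by `f` is *canonically
colored* if it is monochromatic, rainbow, lower lexicographic (two edges of the copy get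
the same color iff they have the same smaller endpoint), or upper lexicographic (two edges
of the copy get the same color iff they have the same larger endpoint). -/
def CanonicalCopy {m n : ℕ} (E : List (Fin m × Fin m)) (χ : Sym2 (Fin n) → ℕ)
    (f : Fin m → Fin n) : Prop :=
  (∀ e ∈ E, ∀ e' ∈ E, χ s(f e.1, f e.2) = χ s(f e'.1, f e'.2)) ∨
  (∀ e ∈ E, ∀ e' ∈ E, χ s(f e.1, f e.2) = χ s(f e'.1, f e'.2) → e = e') ∨
  (∀ e ∈ E, ∀ e' ∈ E, (χ s(f e.1, f e.2) = χ s(f e'.1, f e'.2) ↔ e.1 = e'.1)) ∨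
  (∀ e ∈ E, ∀ e' ∈ E, (χ s(f e.1, f e.2) = χ s(f e'.1, f e'.2) ↔ e.2 = e'.2))

/-- The edge-coloring `χ` of the ordered complete graph on `Fin n` contains a canonically
colored copy of the ordered graph on `Fin m` with edge list `E`: a copy is given by an
order-preserving (strictly monotone) injection `f : Fin m → Fin n`. -/
def HasCanonicalCopy {m : ℕ} (E : List (Fin m × Fin m)) (n : ℕ)
    (χ : Sym2 (Fin n) → ℕ) : Prop :=
  ∃ f : Fin m → Fin n, StrictMono f ∧ CanonicalCopy E χ f

/-- The edge list of the ordered graph (1-indexed in the paper; 0-indexed here). -/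
def pathEdges : List (Fin 4 × Fin 4) := [(0, 3), (1, 2), (2, 3)]

/-!
In a copy `a < b < c < d` of the path, the edges `ad` and `cd` share their larger endpoint while
the three smaller endpoints are distinct, so the copy is canonical exactly when the middle edge
`bc` has the color of `ad` iff it has the color of `cd`. A coloring without canonical copies
therefore gives `bc` the color of exactly one of `ad`, `cd`. In particular `χ(ad) ≠ χ(cd)`
whenever `a + 2 ≤ c`, and `bc` takes the color of `cd` as soon as `b ≥ 3`, since otherwise
`χ(0d) = χ(bc) = χ(2d)`. On `K_7` this gives `χ(45) = χ(56)` and `χ(34) = χ(46)`, which force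
`χ(05) = χ(14) = χ(06) = χ(25)`, contradicting `χ(05) ≠ χ(25)`. On `K_6`, color the edges
meeting `{0, 1}` with `0`, the edge `25` with `2` and all others with `1`.
-/

theorem canonicalCopy_pathEdges_iff {n : ℕ} {χ : Sym2 (Fin n) → ℕ} {f : Fin 4 → Fin n} :
    CanonicalCopy pathEdges χ f ↔
      (χ s(f 1, f 2) = χ s(f 0, f 3) ↔ χ s(f 1, f 2) = χ s(f 2, f 3)) := by
  simp only [CanonicalCopy, pathEdges, List.forall_mem_cons]
  generalize χ s(f 0, f 3) = x, χ s(f 1, f 2) = y, χ s(f 2, f 3) = z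
  by_cases hxy : x = y <;> by_cases hyz : y = z <;> by_cases hxz : x = z <;> simp_all [eq_comm]

def AvoidsCanonicalPath {n : ℕ} (χ : Sym2 (Fin n) → ℕ) : Prop :=
  ∀ a b c d : Fin n, a < b → b < c → c < d → Xor (χ s(b, c) = χ s(a, d)) (χ s(b, c) = χ s(c, d))

theorem not_hasCanonicalCopy_pathEdges_iff {n : ℕ} {χ : Sym2 (Fin n) → ℕ} :
    ¬ HasCanonicalCopy pathEdges n χ ↔ AvoidsCanonicalPath χ := by
  constructor
  · intro h a b c d hab hbc hcd
    rw [xor_iff_not_iff]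
    exact fun hiff => h ⟨![a, b, c, d], by simp [hab, hbc, hcd], canonicalCopy_pathEdges_iff.2 hiff⟩
  · rintro h ⟨f, hf, hcopy⟩
    exact (xor_iff_not_iff _ _).1 (h _ _ _ _ (hf (by decide)) (hf (by decide)) (hf (by decide)))
      (canonicalCopy_pathEdges_iff.1 hcopy)

namespace AvoidsCanonicalPath

variable {n : ℕ} {χ : Sym2 (Fin n) → ℕ} {a m a' b c d : Fin n}

theorem mid_eq_left_or_right (h : AvoidsCanonicalPath χ)
    (hab : a < b := by decide) (hbc : b < c := by decide) (hcd : c < d := by decide) :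
    χ s(b, c) = χ s(a, d) ∨ χ s(b, c) = χ s(c, d) :=
  (h a b c d hab hbc hcd).or

theorem left_ne_right (h : AvoidsCanonicalPath χ)
    (ham : a < m := by decide) (hmc : m < c := by decide) (hcd : c < d := by decide) :
    χ s(a, d) ≠ χ s(c, d) := fun hac => by
  simpa [hac] using h a m c d ham hmc hcd

theorem mid_eq_right_of_three_lt (h : AvoidsCanonicalPath χ) (ham : a < m := by decide)
    (hma' : m < a' := by decide) (ha'b : a' < b := by decide) (hbc : b < c := by decide)
    (hcd : c < d := by decide) : χ s(b, c) = χ s(c, d) := by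
  by_contra hne
  have hbc_ad :=
    (h.mid_eq_left_or_right (ham.trans (hma'.trans ha'b)) hbc hcd).resolve_right hne
  have hbc_a'd := (h.mid_eq_left_or_right ha'b hbc hcd).resolve_right hne
  exact h.left_ne_right ham hma' (ha'b.trans (hbc.trans hcd)) (hbc_ad.symm.trans hbc_a'd)

end AvoidsCanonicalPath

theorem not_avoidsCanonicalPath_fin_seven (χ : Sym2 (Fin 7) → ℕ) : ¬ AvoidsCanonicalPath χ := by
  intro h
  have h456 : χ s(4, 5) = χ s(5, 6) := h.mid_eq_right_of_three_lt (a := 0) (m := 1) (a' := 2)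
  have h346 : χ s(3, 4) = χ s(4, 6) := h.mid_eq_right_of_three_lt (a := 0) (m := 1) (a' := 2)
  have h256 : χ s(2, 5) = χ s(0, 6) :=
    (h.mid_eq_left_or_right (a := 0)).resolve_right fun e =>
      absurd (e.trans h456.symm) (h.left_ne_right (m := 3))
  have h146 : χ s(1, 4) = χ s(0, 6) :=
    (h.mid_eq_left_or_right (a := 0)).resolve_right fun e =>
      absurd (e.trans h346.symm) (h.left_ne_right (m := 2))
  have h145 : χ s(1, 4) = χ s(0, 5) :=
    (h.mid_eq_left_or_right (a := 0)).resolve_right fun e =>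
      absurd (h146.symm.trans (e.trans h456)) (h.left_ne_right (m := 1))
  exact absurd (h145.symm.trans (h146.trans h256.symm)) (h.left_ne_right (m := 1))

def pathAvoidingColoring : Sym2 (Fin 6) → ℕ :=
  Sym2.lift ⟨fun i j => if min i j ≤ 1 then 0 else if min i j = 2 ∧ max i j = 5 then 2 else 1,
    fun i j => by simp only [min_comm, max_comm]⟩

theorem avoidsCanonicalPath_pathAvoidingColoring : AvoidsCanonicalPath pathAvoidingColoring := by
  unfold AvoidsCanonicalPath
  decide

/-- ER(pathEdges) = 7. -/
theorem ER_P4_1423 :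
    (∀ χ : Sym2 (Fin 7) → ℕ, HasCanonicalCopy pathEdges 7 χ) ∧
    (∃ χ : Sym2 (Fin 6) → ℕ, ¬ HasCanonicalCopy pathEdges 6 χ) :=
  ⟨fun χ => not_not.1 fun h => not_avoidsCanonicalPath_fin_seven χ
      (not_hasCanonicalCopy_pathEdges_iff.1 h),
    ⟨pathAvoidingColoring,
      not_hasCanonicalCopy_pathEdges_iff.2 avoidsCanonicalPath_pathAvoidingColoring⟩⟩
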